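/- arXiv:2304.04162 — 6 statements merged into one kernel-verified Lean document; each statement's English description precedes it below -/
import Mathlib

section
/- Let N and L be finite sets, let u_i : (N → L) → ℝ for each i ∈ N satisfy the locality property, and let ψ(a) = Σ_{i∈N} u_i(a). Then for every device n ∈ N and every pair of assignments a, a' : N → L that agree at every device other than n, one has (Σ_{i ∈ N, a i ∈ {a n, a' n}} u_i(a)) − (Σ_{i ∈ N, a' i ∈ {a n, a' n}} u_i(a')) = ψ(a) − ψ(a'). In particular, with the altruistic utility U_n(a) := Σ_{i : a i ∈ {a n, a' n}} u_i(a), the game is an exact potential game with potential ψ: U_n(a) − U_n(a') = ψ(a) − ψ(a') for every unilateral deviation of device n. -/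
open Finset in
/-- Appendix A key identity: with local utilities `u i` and potential
`ψ a = ∑ i, u i a`, for any unilateral deviation of device `n` from `a` to `a'`, the
change in the altruistic utility (total utility of the two affected coalitions)
equals the change in the potential, i.e. the game is an exact potential game. -/
theorem altruistic_exact_potential {N L : Type*} [Fintype N] [Fintype L] [DecidableEq L]
    (u : N → (N → L) → ℝ)
    (hloc : ∀ (n : N) (a a' : N → L), (∀ i, i ≠ n → a i = a' i) →
      ∀ i, i ≠ n → a i ≠ a n → a i ≠ a' n → u i a = u i a')
    (ψ : (N → L) → ℝ) (hψ : ∀ a, ψ a = ∑ i, u i a) :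
    ∀ (n : N) (a a' : N → L), (∀ i, i ≠ n → a i = a' i) →
      (∑ i ∈ univ.filter (fun i => a i = a n ∨ a i = a' n), u i a) -
        (∑ i ∈ univ.filter (fun i => a' i = a n ∨ a' i = a' n), u i a') =
      ψ a - ψ a' := by
  intro n a a' h
  have hSeq : (univ.filter (fun i => a' i = a n ∨ a' i = a' n)) =
      (univ.filter (fun i => a i = a n ∨ a i = a' n)) := by
    ext i
    simp only [mem_filter, mem_univ, true_and]
    by_cases hi : i = n
    · subst hi; simp
    · rw [h i hi]
  rw [hSeq, hψ, hψ,
    ← sum_filter_add_sum_filter_not univ (fun i => a i = a n ∨ a i = a' n) (fun i => u i a),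
    ← sum_filter_add_sum_filter_not univ (fun i => a i = a n ∨ a i = a' n) (fun i => u i a')]
  have key : ∑ i ∈ univ.filter (fun i => ¬(a i = a n ∨ a i = a' n)), u i a =
      ∑ i ∈ univ.filter (fun i => ¬(a i = a n ∨ a i = a' n)), u i a' := by
    refine sum_congr rfl fun i hi => ?_
    simp only [mem_filter, mem_univ, true_and, not_or] at hi
    have hne : i ≠ n := by rintro rfl; exact hi.1 rfl
    exact hloc n a a' h i hne hi.1 hi.2
  rw [key]; ring
end

section
/- Let N and L be finite sets, let u_i : (N → L) → ℝ for each i ∈ N satisfy the locality property, and let ψ(a) = Σ_{i∈N} u_i(a). Suppose a' is obtained from a by a switch of device n (a' n ≠ a n and a' agrees with a at every other device) that strictly satisfies the coalition altruistic preference rule, i.e., Σ_{i ∈ N, a' i ∈ {a n, a' n}} u_i(a') > Σ_{i ∈ N, a i ∈ {a n, a' n}} u_i(a). Then ψ(a') > ψ(a). -/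
open Finset in
/-- a switch of device `n` strictly satisfying the coalition altruistic
preference rule strictly increases the potential `ψ a = ∑ i, u i a`. -/
theorem altruistic_switch_increases_potential {N L : Type*} [Fintype N] [Fintype L]
    [DecidableEq L]
    (u : N → (N → L) → ℝ)
    (hloc : ∀ (n : N) (a a' : N → L), (∀ i, i ≠ n → a i = a' i) →
      ∀ i, i ≠ n → a i ≠ a n → a i ≠ a' n → u i a = u i a')
    (ψ : (N → L) → ℝ) (hψ : ∀ a, ψ a = ∑ i, u i a)
    (n : N) (a a' : N → L) (hswitch : a' n ≠ a n)
    (hagree : ∀ i, i ≠ n → a' i = a i)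
    (hpref : (∑ i ∈ univ.filter (fun i => a i = a n ∨ a i = a' n), u i a) <
      (∑ i ∈ univ.filter (fun i => a' i = a n ∨ a' i = a' n), u i a')) :
    ψ a < ψ a' := by
  classical
  set S : Finset N := univ.filter (fun i => a i = a n ∨ a i = a' n) with hS
  have hSeq : univ.filter (fun i => a' i = a n ∨ a' i = a' n) = S := by
    apply Finset.filter_congr
    intro i _
    by_cases hi : i = n
    · subst hi; simp
    · rw [hagree i hi]
  have hcompl : ∀ i ∈ Sᶜ, u i a = u i a' := by
    intro i hi
    simp only [S, Finset.mem_compl, Finset.mem_filter, Finset.mem_univ, true_and,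
      not_or] at hi
    have hin : i ≠ n := by rintro rfl; exact hi.1 rfl
    exact hloc n a a' (fun j hj => (hagree j hj).symm) i hin hi.1 hi.2
  rw [hψ a, hψ a', ← Finset.sum_add_sum_compl S (u · a),
    ← Finset.sum_add_sum_compl S (u · a'),
    Finset.sum_congr rfl hcompl]
  rw [hSeq] at hpref
  exact add_lt_add_left hpref _
end

section
/- Let N and L be finite sets, let u_i : (N → L) → ℝ for each i ∈ N satisfy the locality property, and let ψ(a) = Σ_{i∈N} u_i(a). Then: (1) there is no infinite sequence a_0, a_1, a_2, … of assignments in which, for every k, a_{k+1} is obtained from a_k by a switch of a single device that strictly satisfies the coalition altruistic preference rule (i.e., Σ_{i : a_{k+1} i ∈ {a_k n, a_{k+1} n}} u_i(a_{k+1}) > Σ_{i : a_k i ∈ {a_k n, a_{k+1} n}} u_i(a_k) where n is the switching device); and (2) there exists a stable assignment a* — namely any maximizer of ψ over the finite set of assignments — from which no single-device switch strictly satisfying the coalition altruistic preference rule is possible. -/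
open Finset in
lemma altruistic_key {N L : Type*}
    [Fintype N] [Fintype L] [Nonempty L] [DecidableEq L]
    (u : N → (N → L) → ℝ)
    (hloc : ∀ (n : N) (a a' : N → L), (∀ i, i ≠ n → a i = a' i) →
      ∀ i, i ≠ n → a i ≠ a n → a i ≠ a' n → u i a = u i a')
    (n : N) (a a' : N → L) (hne : a' n ≠ a n)
    (hagree : ∀ i, i ≠ n → a' i = a i)
    (hlt : (∑ i ∈ univ.filter (fun i => a i = a n ∨ a i = a' n), u i a) <
      (∑ i ∈ univ.filter (fun i => a' i = a n ∨ a' i = a' n), u i a')) :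
    (∑ i, u i a) < ∑ i, u i a' := by
  classical
  have hset : univ.filter (fun i => a' i = a n ∨ a' i = a' n)
      = univ.filter (fun i => a i = a n ∨ a i = a' n) := by
    ext i
    simp only [mem_filter, mem_univ, true_and]
    by_cases h : i = n
    · subst h; tauto
    · rw [hagree i h]
  rw [hset] at hlt
  have hcompl : ∀ i ∈ univ.filter (fun i => ¬(a i = a n ∨ a i = a' n)),
      u i a = u i a' := by
    intro i hi
    simp only [mem_filter, mem_univ, true_and, not_or] at hi
    have hin : i ≠ n := by
      intro h; subst h; exact hi.1 rfl
    exact hloc n a a' (fun j hj => (hagree j hj).symm) i hin hi.1 hi.2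
  have h1 := Finset.sum_filter_add_sum_filter_not univ
    (fun i => a i = a n ∨ a i = a' n) (fun i => u i a)
  have h2 := Finset.sum_filter_add_sum_filter_not univ
    (fun i => a i = a n ∨ a i = a' n) (fun i => u i a')
  rw [← h1, ← h2]
  have := Finset.sum_congr rfl hcompl
  linarith

open Finset in
/-- Theorems 2 and 3, altruistic rule: (1) there is no infinite
sequence of single-device switches each strictly satisfying the coalition
altruistic preference rule; (2) there exists a stable assignment from which no
such strict switch is possible. -/
theorem altruistic_switches_terminate_and_stable_exists {N L : Type*}
    [Fintype N] [Fintype L] [Nonempty L] [DecidableEq L]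
    (u : N → (N → L) → ℝ)
    (hloc : ∀ (n : N) (a a' : N → L), (∀ i, i ≠ n → a i = a' i) →
      ∀ i, i ≠ n → a i ≠ a n → a i ≠ a' n → u i a = u i a')
    (ψ : (N → L) → ℝ) (hψ : ∀ a, ψ a = ∑ i, u i a) :
    (¬ ∃ seq : ℕ → (N → L), ∀ k, ∃ n : N,
      seq (k + 1) n ≠ seq k n ∧
      (∀ i, i ≠ n → seq (k + 1) i = seq k i) ∧
      (∑ i ∈ univ.filter (fun i => seq k i = seq k n ∨ seq k i = seq (k + 1) n),
          u i (seq k)) <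
        (∑ i ∈ univ.filter
            (fun i => seq (k + 1) i = seq k n ∨ seq (k + 1) i = seq (k + 1) n),
          u i (seq (k + 1)))) ∧
    (∃ astar : N → L, ∀ (n : N) (a' : N → L),
      ¬ (a' n ≠ astar n ∧
        (∀ i, i ≠ n → a' i = astar i) ∧
        (∑ i ∈ univ.filter (fun i => astar i = astar n ∨ astar i = a' n),
            u i astar) <
          (∑ i ∈ univ.filter (fun i => a' i = astar n ∨ a' i = a' n),
            u i a'))) := by
  classical
  constructor
  · rintro ⟨seq, hseq⟩
    have hmono : StrictMono (fun k => ψ (seq k)) := by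
      apply strictMono_nat_of_lt_succ
      intro k
      obtain ⟨n, hn1, hn2, hn3⟩ := hseq k
      rw [hψ, hψ]
      exact altruistic_key u hloc n (seq k) (seq (k+1)) hn1 hn2 hn3
    have hinj : Function.Injective seq := fun x y hxy => by
      have := hmono.injective (a₁ := x) (a₂ := y) (by simp [hxy])
      exact this
    exact (Finite.exists_ne_map_eq_of_infinite seq).elim
      (fun x hx => hx.choose_spec.1 (hinj hx.choose_spec.2))
  · obtain ⟨astar, hmax⟩ := Finite.exists_max ψ
    refine ⟨astar, fun n a' ⟨h1, h2, h3⟩ => ?_⟩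
    have := altruistic_key u hloc n astar a' h1 h2 h3
    have h4 := hmax a'
    rw [hψ astar, hψ a'] at h4
    linarith
end

section
/- Let N and L be finite sets, let u_i : (N → L) → ℝ for each i ∈ N satisfy the locality property, and let ψ(a) = Σ_{i∈N} u_i(a). Suppose a' is obtained from a by a switch of device n (a' n ≠ a n, agreement elsewhere) that strictly satisfies the Pareto preference rule: u_n(a') > u_n(a); u_i(a') ≥ u_i(a) for every device i ≠ n in the new coalition (a' i = a' n); and u_i(a') ≥ u_i(a) for every device i ≠ n in the original coalition (a i = a n). Then ψ(a') > ψ(a), and consequently there is no infinite sequence of assignments in which each term is obtained from the previous one by such a strict Pareto switch; every sequence of strict Pareto switches terminates at a partition admitting no further strict Pareto switch. -/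
open Finset in
/-- Theorem 2, Pareto rule: a switch of a single device strictly
satisfying the Pareto preference rule strictly increases the potential
`ψ a = ∑ i, u i a`; consequently there is no infinite sequence of strict Pareto
switches (every such sequence terminates at a partition admitting no further
strict Pareto switch). -/
theorem pareto_switch_increases_potential_and_terminates {N L : Type*}
    [Fintype N] [Fintype L]
    (u : N → (N → L) → ℝ)
    (hloc : ∀ (n : N) (a a' : N → L), (∀ i, i ≠ n → a i = a' i) →
      ∀ i, i ≠ n → a i ≠ a n → a i ≠ a' n → u i a = u i a') 
    (ψ : (N → L) → ℝ) (hψ : ∀ a, ψ a = ∑ i, u i a) :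
    (∀ (n : N) (a a' : N → L), a' n ≠ a n → (∀ i, i ≠ n → a' i = a i) →
      u n a < u n a' →
      (∀ i, i ≠ n → a' i = a' n → u i a ≤ u i a') →
      (∀ i, i ≠ n → a i = a n → u i a ≤ u i a') →
      ψ a < ψ a') ∧
    (¬ ∃ seq : ℕ → (N → L), ∀ k, ∃ n : N,
      seq (k + 1) n ≠ seq k n ∧
      (∀ i, i ≠ n → seq (k + 1) i = seq k i) ∧
      u n (seq k) < u n (seq (k + 1)) ∧
      (∀ i, i ≠ n → seq (k + 1) i = seq (k + 1) n → u i (seq k) ≤ u i (seq (k + 1))) ∧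
      (∀ i, i ≠ n → seq k i = seq k n → u i (seq k) ≤ u i (seq (k + 1)))) := by
  have main : ∀ (n : N) (a a' : N → L), a' n ≠ a n → (∀ i, i ≠ n → a' i = a i) →
      u n a < u n a' →
      (∀ i, i ≠ n → a' i = a' n → u i a ≤ u i a') →
      (∀ i, i ≠ n → a i = a n → u i a ≤ u i a') →
      ψ a < ψ a' := by
    intro n a a' hne hag hn hnew hold
    rw [hψ a, hψ a']
    refine Finset.sum_lt_sum (fun i _ => ?_) ⟨n, Finset.mem_univ n, hn⟩
    · 
      by_cases hin : i = n
      · subst hin; exact le_of_lt hn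
      · by_cases h1 : a i = a n
        · exact hold i hin h1
        · by_cases h2 : a i = a' n
          · exact hnew i hin (by rw [hag i hin]; exact h2)
          · exact le_of_eq (hloc n a a' (fun j hj => (hag j hj).symm) i hin h1 h2)
  refine ⟨main, ?_⟩
  rintro ⟨seq, hseq⟩
  have hmono : StrictMono (fun k => ψ (seq k)) := by
    apply strictMono_nat_of_lt_succ
    intro k
    obtain ⟨n, h1, h2, h3, h4, h5⟩ := hseq k
    exact main n (seq k) (seq (k + 1)) h1 h2 h3 h4 h5
  have hinj : Function.Injective seq := fun i j h => hmono.injective (by rw [h])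
  have : Infinite (N → L) := Infinite.of_injective seq hinj
  exact not_finite (N → L)
end

section
/- Let χ, λ, F, B, ξ, ρ > 0 and A > 0 be real constants, and let G, m ∈ ℝ. Then the edge-server utility function u(Z) = χ·(G − λ/Z − F·λ/(B·(A − Z²))) − ξ·ρ·Z − m is strictly concave on the open interval (0, √A). -/
/-- the edge-server utility
`u(Z) = χ (G − λ/Z − Fλ/(B(A − Z²))) − ξρZ − m` is strictly concave on `(0, √A)`. -/
theorem edge_utility_strictConcave (χ lam F B ξ ρ A : ℝ) (G m : ℝ)
    (hχ : 0 < χ) (hlam : 0 < lam) (hF : 0 < F) (hB : 0 < B) (hξ : 0 < ξ)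
    (hρ : 0 < ρ) (hA : 0 < A) :
    StrictConcaveOn ℝ (Set.Ioo 0 (Real.sqrt A))
      (fun Z => χ * (G - lam / Z - F * lam / (B * (A - Z ^ 2))) - ξ * ρ * Z - m) := by
  set u : ℝ → ℝ :=
    fun Z => χ * (G - lam / Z - F * lam / (B * (A - Z ^ 2))) - ξ * ρ * Z - m with hu_def
  set g : ℝ → ℝ :=
    fun x => χ * (lam / x ^ 2 - 2 * F * lam * x / (B * (A - x ^ 2) ^ 2)) - ξ * ρ with hg_def
  have hsub : ∀ x ∈ Set.Ioo (0:ℝ) (Real.sqrt A), 0 < x ∧ 0 < A - x ^ 2 := by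
    rintro x ⟨hx0, hx1⟩
    refine ⟨hx0, ?_⟩
    have : x ^ 2 < (Real.sqrt A) ^ 2 := pow_lt_pow_left₀ hx1 hx0.le (by norm_num)
    rw [Real.sq_sqrt hA.le] at this
    linarith
  have hu : ∀ x ∈ Set.Ioo (0:ℝ) (Real.sqrt A), HasDerivAt u (g x) x := by
    intro x hx
    obtain ⟨hx0, hAx⟩ := hsub x hx
    have hx0' : x ≠ 0 := hx0.ne'
    have hd : B * (A - x ^ 2) ≠ 0 := by positivity
    have h1 : HasDerivAt (fun Z : ℝ => lam / Z) (-(lam * (x ^ 2)⁻¹)) x := by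
      simpa [div_eq_mul_inv, mul_comm] using ((hasDerivAt_inv hx0').const_mul lam)
    have hD : HasDerivAt (fun Z : ℝ => B * (A - Z ^ 2)) (B * -(2 * x ^ 1)) x := by
      exact ((hasDerivAt_pow 2 x).const_sub A).const_mul B
    have h2 : HasDerivAt (fun Z : ℝ => F * lam / (B * (A - Z ^ 2)))
        ((0 * (B * (A - x ^ 2)) - F * lam * (B * -(2 * x ^ 1))) / (B * (A - x ^ 2)) ^ 2) x :=
      (hasDerivAt_const x (F * lam)).div hD hd
    have h3 : HasDerivAt (fun Z : ℝ => ξ * ρ * Z) (ξ * ρ) x := by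
      simpa using (hasDerivAt_id x).const_mul (ξ * ρ)
    have h := ((((hasDerivAt_const x G).sub h1).sub h2).const_mul χ).sub h3 |>.sub_const m
    have hAx' : A - x ^ 2 ≠ 0 := hAx.ne'
    have hB' : B ≠ 0 := hB.ne'
    convert h using 1
    show χ * (lam / x ^ 2 - 2 * F * lam * x / (B * (A - x ^ 2) ^ 2)) - ξ * ρ = _
    rw [mul_pow]
    field_simp
    ring
    all_goals rfl
  have hg : ∀ x ∈ Set.Ioo (0:ℝ) (Real.sqrt A),
      HasDerivAt g (χ * (-(2 * lam / x ^ 3) - 2 * F * lam * (A + 3 * x ^ 2) / (B * (A - x ^ 2) ^ 3))) x := by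
    intro x hx
    obtain ⟨hx0, hAx⟩ := hsub x hx
    have hx0' : x ≠ 0 := hx0.ne'
    have hx2 : x ^ 2 ≠ 0 := pow_ne_zero 2 hx0'
    have hd : B * (A - x ^ 2) ^ 2 ≠ 0 := by positivity
    have h1 : HasDerivAt (fun Z : ℝ => lam / Z ^ 2)
        (lam * (-(↑2 * x ^ 1) / (x ^ 2) ^ 2)) x := by
      simpa [div_eq_mul_inv] using ((hasDerivAt_pow 2 x).inv hx2).const_mul lam
    have hN : HasDerivAt (fun Z : ℝ => 2 * F * lam * Z) (2 * F * lam) x := by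
      simpa using (hasDerivAt_id x).const_mul (2 * F * lam)
    have hD : HasDerivAt (fun Z : ℝ => B * (A - Z ^ 2) ^ 2)
        (B * (↑2 * (A - x ^ 2) ^ 1 * -(2 * x ^ 1))) x := by
      exact (((((hasDerivAt_pow 2 x)).const_sub A).pow 2)).const_mul B
    have h2 := hN.div hD hd
    have h := ((h1.sub h2).const_mul χ).sub_const (ξ * ρ)
    have hAx' : A - x ^ 2 ≠ 0 := hAx.ne'
    have hB' : B ≠ 0 := hB.ne'
    convert h using 1
    show χ * (-(2 * lam / x ^ 3) - 2 * F * lam * (A + 3 * x ^ 2) / (B * (A - x ^ 2) ^ 3)) = _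
    field_simp
    ring
    all_goals rfl
  have hI : interior (Set.Ioo (0:ℝ) (Real.sqrt A)) = Set.Ioo 0 (Real.sqrt A) :=
    interior_Ioo
  apply strictConcaveOn_of_deriv2_neg (convex_Ioo _ _)
  · exact fun x hx => (hu x hx).continuousAt.continuousWithinAt
  · intro x hx
    rw [hI] at hx
    obtain ⟨hx0, hAx⟩ := hsub x hx
    have hderiv : deriv (deriv u) x
        = χ * (-(2 * lam / x ^ 3) - 2 * F * lam * (A + 3 * x ^ 2) / (B * (A - x ^ 2) ^ 3)) := by
      have heq : Set.EqOn (deriv u) g (Set.Ioo 0 (Real.sqrt A)) :=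
        fun y hy => (hu y hy).deriv
      have hnhds : deriv u =ᶠ[nhds x] g :=
        Filter.eventuallyEq_of_mem (isOpen_Ioo.mem_nhds hx) heq
      rw [hnhds.deriv_eq]
      exact (hg x hx).deriv
    simp only [Function.iterate_succ, Function.iterate_zero, Function.comp_apply, Function.id_def]
    rw [hderiv]
    have h1 : 0 < 2 * lam / x ^ 3 := by positivity
    have h2 : 0 < 2 * F * lam * (A + 3 * x ^ 2) / (B * (A - x ^ 2) ^ 3) := by positivity
    nlinarith
end

section
/- Let χ, λ, F, B, ξ, ρ > 0 and A > 0 be real constants, and let G, m ∈ ℝ. Define u(Z) = χ·(G − λ/Z − F·λ/(B·(A − Z²))) − ξ·ρ·Z − m on (0, √A). If Z* ∈ (0, √A) satisfies the first-order condition χ·λ/(Z*)² − ξ·ρ − 2·F·χ·λ·Z*/(B·(A − (Z*)²)²) = 0, equivalently λ/(Z*)² − F·λ·Z*/(B·(A − (Z*)²)²) = ξ·ρ/χ, then u attains its maximum over (0, √A) at Z*, i.e., u(Z) ≤ u(Z*) for all Z ∈ (0, √A), and Z* is the unique maximizer of u on (0, √A). -/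
open Set

/-- a point `Z*` of `(0, √A)` satisfying the first-order condition
`χλ/Z*² − ξρ − 2FχλZ*/(B(A − Z*²)²) = 0` is the (unique) maximizer of the
edge-server utility `u(Z) = χ (G − λ/Z − Fλ/(B(A − Z²))) − ξρZ − m` on `(0, √A)`. -/
theorem edge_utility_first_order_max (χ lam F B ξ ρ A : ℝ) (G m : ℝ)
    (hχ : 0 < χ) (hlam : 0 < lam) (hF : 0 < F) (hB : 0 < B) (hξ : 0 < ξ)
    (hρ : 0 < ρ) (hA : 0 < A)
    (Zs : ℝ) (hZs : Zs ∈ Set.Ioo 0 (Real.sqrt A))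
    (hfoc : χ * lam / Zs ^ 2 - ξ * ρ - 2 * F * χ * lam * Zs / (B * (A - Zs ^ 2) ^ 2) = 0) :
    (∀ Z ∈ Set.Ioo 0 (Real.sqrt A),
      χ * (G - lam / Z - F * lam / (B * (A - Z ^ 2))) - ξ * ρ * Z - m ≤
        χ * (G - lam / Zs - F * lam / (B * (A - Zs ^ 2))) - ξ * ρ * Zs - m) ∧
    (∀ Z ∈ Set.Ioo 0 (Real.sqrt A),
      (∀ W ∈ Set.Ioo 0 (Real.sqrt A),
        χ * (G - lam / W - F * lam / (B * (A - W ^ 2))) - ξ * ρ * W - m ≤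
          χ * (G - lam / Z - F * lam / (B * (A - Z ^ 2))) - ξ * ρ * Z - m) →
      Z = Zs) := by
  obtain ⟨hZ0, hZA⟩ := hZs
  set u : ℝ → ℝ := fun Z => χ * (G - lam / Z - F * lam / (B * (A - Z ^ 2))) - ξ * ρ * Z - m
    with hu
  set v : ℝ → ℝ := fun Z => χ * lam / Z ^ 2 - ξ * ρ - 2 * F * χ * lam * Z / (B * (A - Z ^ 2) ^ 2)
    with hv
  have hsq : ∀ x ∈ Ioo (0:ℝ) (Real.sqrt A), x ^ 2 < A := by
    intro x hx
    nlinarith [Real.sq_sqrt hA.le, hx.1, hx.2, Real.sqrt_nonneg A]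
  have hZsmem : Zs ∈ Ioo (0:ℝ) (Real.sqrt A) := ⟨hZ0, hZA⟩
  -- derivative of u
  have hderiv : ∀ x ∈ Ioo (0:ℝ) (Real.sqrt A), HasDerivAt u (v x) x := by
    intro x hx
    have hx0 : x ≠ 0 := ne_of_gt hx.1
    have hxA : 0 < A - x ^ 2 := by linarith [hsq x hx]
    have hd : B * (A - x ^ 2) ≠ 0 := mul_ne_zero hB.ne' hxA.ne'
    have h1 : HasDerivAt (fun Z : ℝ => lam / Z) ((0 * x - lam * 1) / x ^ 2) x :=
      (hasDerivAt_const x lam).div (hasDerivAt_id x) hx0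
    have hin : HasDerivAt (fun Z : ℝ => B * (A - Z ^ 2)) (B * -(2 * x ^ 1)) x :=
      (((hasDerivAt_pow 2 x).const_sub A).const_mul B)
    have h2 : HasDerivAt (fun Z : ℝ => F * lam / (B * (A - Z ^ 2)))
        ((0 * (B * (A - x ^ 2)) - F * lam * (B * -(2 * x ^ 1))) / (B * (A - x ^ 2)) ^ 2) x :=
      (hasDerivAt_const x (F * lam)).div hin hd
    have h3 : HasDerivAt u
        (χ * (0 - (0 * x - lam * 1) / x ^ 2 -
          (0 * (B * (A - x ^ 2)) - F * lam * (B * -(2 * x ^ 1))) / (B * (A - x ^ 2)) ^ 2)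
          - ξ * ρ * 1 - 0) x := by
      exact ((((((hasDerivAt_const x G).sub h1).sub h2).const_mul χ).sub
        ((hasDerivAt_id x).const_mul (ξ * ρ))).sub (hasDerivAt_const x m))
    convert h3 using 1
    simp only [hv]
    field_simp
    ring
  have hvZs : v Zs = 0 := hfoc
  -- v is strictly decreasing
  have hanti : ∀ x ∈ Ioo (0:ℝ) (Real.sqrt A), ∀ y ∈ Ioo (0:ℝ) (Real.sqrt A),
      x < y → v y < v x := by
    intro x hx y hy hxy
    have hx0 := hx.1
    have hy0 := hy.1
    have hxA : 0 < A - x ^ 2 := by linarith [hsq x hx]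
    have hyA : 0 < A - y ^ 2 := by linarith [hsq y hy]
    have h1 : χ * lam / y ^ 2 < χ * lam / x ^ 2 := by
      apply div_lt_div_of_pos_left (by positivity) (by positivity)
      nlinarith
    have hdx : 0 < B * (A - x ^ 2) ^ 2 := by positivity
    have hdy : 0 < B * (A - y ^ 2) ^ 2 := by positivity
    have h2 : 2 * F * χ * lam * x / (B * (A - x ^ 2) ^ 2) <
        2 * F * χ * lam * y / (B * (A - y ^ 2) ^ 2) := by
      rw [div_lt_div_iff₀ hdx hdy]
      have hc : 0 < 2 * F * χ * lam := by positivity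
      have hy2x2 : x ^ 2 < y ^ 2 := by nlinarith
      have hxy2 : (A - y ^ 2) ^ 2 < (A - x ^ 2) ^ 2 := by nlinarith
      have s1 : x * (A - y ^ 2) ^ 2 < y * (A - y ^ 2) ^ 2 :=
        mul_lt_mul_of_pos_right hxy (by positivity)
      have s2 : y * (A - y ^ 2) ^ 2 < y * (A - x ^ 2) ^ 2 :=
        mul_lt_mul_of_pos_left hxy2 hy0
      have key := mul_lt_mul_of_pos_left (lt_trans s1 s2) (mul_pos hc hB)
      calc 2 * F * χ * lam * x * (B * (A - y ^ 2) ^ 2)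
          = 2 * F * χ * lam * B * (x * (A - y ^ 2) ^ 2) := by ring
        _ < 2 * F * χ * lam * B * (y * (A - x ^ 2) ^ 2) := key
        _ = 2 * F * χ * lam * y * (B * (A - x ^ 2) ^ 2) := by ring
    simp only [hv]
    linarith
  have hvpos : ∀ x ∈ Ioo (0:ℝ) Zs, 0 < v x := by
    intro x hx
    have hxmem : x ∈ Ioo (0:ℝ) (Real.sqrt A) := ⟨hx.1, hx.2.trans hZA⟩
    have := hanti x hxmem Zs hZsmem hx.2
    linarith [hvZs ▸ this]
  have hvneg : ∀ x ∈ Ioo Zs (Real.sqrt A), v x < 0 := by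
    intro x hx
    have hxmem : x ∈ Ioo (0:ℝ) (Real.sqrt A) := ⟨hZ0.trans hx.1, hx.2⟩
    have := hanti Zs hZsmem x hxmem hx.1
    linarith [hvZs ▸ this]
  -- strict monotonicity on the two sides
  have hsub1 : Ioc (0:ℝ) Zs ⊆ Ioo (0:ℝ) (Real.sqrt A) := by
    intro x hx; exact ⟨hx.1, lt_of_le_of_lt hx.2 hZA⟩
  have hsub2 : Ico Zs (Real.sqrt A) ⊆ Ioo (0:ℝ) (Real.sqrt A) := by
    intro x hx; exact ⟨lt_of_lt_of_le hZ0 hx.1, hx.2⟩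
  have hmono : StrictMonoOn u (Ioc (0:ℝ) Zs) := by
    apply StrictMonoOn.mono (s := Ioc (0:ℝ) Zs) ?_ (le_refl _)
    apply strictMonoOn_of_deriv_pos (convex_Ioc _ _)
    · intro x hx
      exact (hderiv x (hsub1 hx)).continuousAt.continuousWithinAt
    · intro x hx
      rw [interior_Ioc] at hx
      rw [(hderiv x (hsub1 (Ioo_subset_Ioc_self hx))).deriv]
      exact hvpos x hx
  have hantiOn : StrictAntiOn u (Ico Zs (Real.sqrt A)) := by
    apply strictAntiOn_of_deriv_neg (convex_Ico _ _)
    · intro x hx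
      exact (hderiv x (hsub2 hx)).continuousAt.continuousWithinAt
    · intro x hx
      rw [interior_Ico] at hx
      rw [(hderiv x (hsub2 (Ioo_subset_Ico_self hx))).deriv]
      exact hvneg x hx
  have hmax : ∀ Z ∈ Ioo (0:ℝ) (Real.sqrt A), Z ≠ Zs → u Z < u Zs := by
    intro Z hZ hne
    rcases lt_or_gt_of_ne hne with h | h
    · exact hmono ⟨hZ.1, h.le⟩ ⟨hZ0, le_refl Zs⟩ h
    · exact hantiOn ⟨le_refl Zs, hZA⟩ ⟨h.le, hZ.2⟩ h
  constructor
  · intro Z hZ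
    rcases eq_or_ne Z Zs with rfl | hne
    · exact le_refl _
    · exact (hmax Z hZ hne).le
  · intro Z hZ hopt
    by_contra hne
    have h1 := hmax Z hZ hne
    have h2 := hopt Zs hZsmem
    exact absurd h2 (not_le.mpr h1)
end
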